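/- arXiv:2012.00814 — 5 statements merged into one kernel-verified Lean document; each statement's English description precedes it below -/
import Mathlib

section
/- For 0 < c < 1 and ν < 1, ν ≠ 0, the saddle point equation c/((1-c)z) + ν/(1-νz) - 1/(1-z) = 0 has exactly two real solutions z_c^± = 1 + ((1-ν)/(2cν))(1 ± √(1 + 4(1-c)cν/(1-ν))), and the solution z_c^- lies in the open interval (0,1). -/
set_option maxHeartbeats 1000000

/-- the saddle point equation has exactly the two real solutions
`z_c^±`, and `z_c^-` lies in `(0,1)`. -/
theorem saddle_point_solutions
    (c ν zp zm : ℝ) (hc : 0 < c) (hc1 : c < 1) (hν : ν < 1) (hν0 : ν ≠ 0)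
    (hzp : zp = 1 + (1 - ν) / (2 * c * ν) *
      (1 + Real.sqrt (1 + 4 * (1 - c) * c * ν / (1 - ν))))
    (hzm : zm = 1 + (1 - ν) / (2 * c * ν) *
      (1 - Real.sqrt (1 + 4 * (1 - c) * c * ν / (1 - ν)))) :
    zp ≠ zm ∧ zm ∈ Set.Ioo (0 : ℝ) 1 ∧
    ∀ z : ℝ, z ≠ 0 → ν * z ≠ 1 → z ≠ 1 →
      (c / ((1 - c) * z) + ν / (1 - ν * z) - 1 / (1 - z) = 0 ↔ z = zp ∨ z = zm) := by
  have hν1 : (0:ℝ) < 1 - ν := by linarith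
  have hc' : (0:ℝ) < 1 - c := by linarith
  have hcν : c * ν ≠ 0 := mul_ne_zero (ne_of_gt hc) hν0
  set D : ℝ := 1 + 4 * (1 - c) * c * ν / (1 - ν) with hDdef
  have hDpos : 0 < D := by
    have key : 0 < 1 - ν * (2*c-1)^2 := by
      nlinarith [mul_nonneg hν1.le (sq_nonneg (2*c-1)), mul_pos hc hc']
    have : D = (1 - ν * (2*c-1)^2) / (1 - ν) := by
      rw [hDdef]; field_simp; ring
    rw [this]; positivity
  set s : ℝ := Real.sqrt D with hsdef
  have hs : 0 < s := Real.sqrt_pos.2 hDpos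
  have hs2 : s ^ 2 = D := Real.sq_sqrt hDpos.le
  have hD2 : (s^2 - 1) * (1-ν) = 4*(1-c)*c*ν := by
    rw [hs2, hDdef]; field_simp; ring
  clear hs2 hDpos hDdef hsdef
  clear_value s D
  clear D
  have hzp2 : 2*c*ν*zp = 2*c*ν + (1-ν)*(1+s) := by
    rw [hzp]; field_simp
  have hzm2 : 2*c*ν*zm = 2*c*ν + (1-ν)*(1-s) := by
    rw [hzm]; field_simp
  clear hzp hzm
  have hB2 : ((1-ν)*s)^2 = (1-ν+2*c*ν)^2 - 4*c^2*ν := by nlinarith [hD2]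
  have hBB : ((1-ν)*s)^2 - (1-ν)^2 = 4*c*(1-c)*ν*(1-ν) := by linear_combination hB2
  have hBpos : 0 < (1-ν)*s := mul_pos hν1 hs
  have hzm0 : 0 < zm := by
    by_contra h
    push_neg at h
    rcases lt_or_gt_of_ne hν0 with hn | hp
    · have hAB : 1 - ν + 2*c*ν < (1-ν)*s := by
        nlinarith [hB2, hBpos, mul_pos (mul_pos hc hc) (neg_pos.2 hn)]
      have h2cν : 2*c*ν < 0 := by nlinarith
      nlinarith [mul_nonneg (neg_nonneg.2 h2cν.le) (neg_nonneg.2 h)]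
    · have hA : 0 < 1 - ν + 2*c*ν := by nlinarith
      have hAB : (1-ν)*s < 1 - ν + 2*c*ν := by
        nlinarith [hB2, hA, hBpos, mul_pos (mul_pos hc hc) hp]
      have h2cν : 0 < 2*c*ν := by nlinarith
      nlinarith [mul_nonneg h2cν.le (neg_nonneg.2 h)]
  have hzm1 : zm < 1 := by
    by_contra h
    push_neg at h
    rcases lt_or_gt_of_ne hν0 with hn | hp
    · have hB : (1-ν)*s < 1-ν := by
        nlinarith [hBB, hBpos, hν1, mul_pos (mul_pos (mul_pos hc hc') (neg_pos.2 hn)) hν1]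
      have h2cν : 2*c*ν < 0 := by nlinarith
      nlinarith [mul_nonneg (neg_nonneg.2 h2cν.le) (by linarith : (0:ℝ) ≤ zm - 1)]
    · have hB : 1-ν < (1-ν)*s := by
        nlinarith [hBB, hBpos, hν1, mul_pos (mul_pos (mul_pos hc hc') hp) hν1]
      have h2cν : 0 < 2*c*ν := by nlinarith
      nlinarith [mul_nonneg h2cν.le (by linarith : (0:ℝ) ≤ zm - 1)]
  have hne : zp ≠ zm := by
    intro h
    rw [h] at hzp2
    linarith [hzp2.symm.trans hzm2, hBpos]
  refine ⟨hne, ⟨hzm0, hzm1⟩, ?_⟩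
  intro z hz0 hνz hz1
  have hνz' : 1 - ν * z ≠ 0 := fun h => hνz (by linarith)
  have hz1' : 1 - z ≠ 0 := fun h => hz1 (by linarith)
  have hνz'' : 1 - z * ν ≠ 0 := by rwa [mul_comm]
  have hfac : 4*c^2*ν^2 * (c*ν*(z - zp)*(z - zm)) =
      4*c^2*ν^2 * (c*ν*z^2 - (1-ν+2*c*ν)*z + c) := by
    have e1 : 2*c*ν*(z - zp) = 2*c*ν*z - (2*c*ν + (1-ν)*(1+s)) := by
      rw [mul_sub, hzp2]
    have e2 : 2*c*ν*(z - zm) = 2*c*ν*z - (2*c*ν + (1-ν)*(1-s)) := by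
      rw [mul_sub, hzm2]
    have key : 4*c^2*ν^2 * (c*ν*(z - zp)*(z - zm)) =
        c*ν*((2*c*ν*z - (2*c*ν + (1-ν)*(1+s))) * (2*c*ν*z - (2*c*ν + (1-ν)*(1-s)))) := by
      rw [← e1, ← e2]; ring
    rw [key]
    linear_combination (-(c*ν*(1-ν))) * hD2
  have hfac' : c*ν*(z - zp)*(z - zm) = c*ν*z^2 - (1-ν+2*c*ν)*z + c :=
    mul_left_cancel₀ (by positivity) hfac
  constructor
  · intro heq
    have hpoly : c*ν*z^2 - (1-ν+2*c*ν)*z + c = 0 := by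
      field_simp at heq
      linear_combination heq
    have hz := hfac'.trans hpoly
    rcases mul_eq_zero.1 hz with h | h
    · rcases mul_eq_zero.1 h with h' | h'
      · exact absurd h' hcν
      · exact Or.inl (by linarith)
    · exact Or.inr (by linarith)
  · intro h
    have hpoly : c*ν*z^2 - (1-ν+2*c*ν)*z + c = 0 := by
      rw [← hfac']
      rcases h with h | h <;> subst h <;> ring
    field_simp
    linear_combination hpoly
end

section
/- Let φ(x,y) be defined by φ(x,y) = ν - 1 if y ≥ x, φ(x,y) = ν if y = x - 1, and φ(x,y) = 0 if y ≤ x - 2, for x, y ∈ ℤ. Then for integers n₂ > n₁ the (n₂ - n₁)-fold convolution φ^{(n₁,n₂)}(x₁,x₂) = (φ * ⋯ * φ)(x₁,x₂) has the contour integral representation φ^{(n₁,n₂)}(x₁,x₂) = ∮_{Γ_{0,1}} (du/2πi) · (ν-1)(1-u)^{x₂-x₁+n₂-n₁-1} / (u^{n₂-n₁} (1-ν u)^{x₂-x₁+n₂-n₁+1}), where Γ_{0,1} is a positively oriented simple contour enclosing u = 0 and u = 1 but not u = 1/ν, and lying outside the circle |u - 1/(1+ν)| = 1/(1+ν). -/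
/-- The one-step kernel `φ(x,y)`: `ν-1` for `y ≥ x`, `ν` for `y = x-1`, `0` for `y ≤ x-2`. -/
noncomputable def phiKer (ν : ℝ) : ℤ → ℤ → ℂ := fun x y =>
  if x ≤ y then (ν : ℂ) - 1 else if y = x - 1 then (ν : ℂ) else 0

/-- `phiIter ν m` is the `(m+1)`-fold convolution `φ * ⋯ * φ`. -/
noncomputable def phiIter (ν : ℝ) : ℕ → ℤ → ℤ → ℂ
  | 0 => phiKer ν
  | m + 1 => fun x z => ∑' y : ℤ, phiKer ν x y * phiIter ν m y z

open Complex Metric MeasureTheory Set Function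

structure Good (ν R : ℝ) : Prop where
  hν : |ν| < 1
  hR1 : 1 / (1 + ν) < R
  hR2 : ν ≠ 0 → R < |1 / ν - 1 / (1 + ν)|

noncomputable def Cc (ν : ℝ) : ℂ := 1 / (1 + (ν : ℂ))

lemma Cc_eq (ν : ℝ) : Cc ν = (((1 + ν)⁻¹ : ℝ) : ℂ) := by simp [Cc, one_div]

/-- The integrand family. -/
noncomputable def Ig (ν : ℝ) (n a : ℤ) : ℂ → ℂ := fun u =>
  ((ν : ℂ) - 1) * (1 - u) ^ a / (u ^ n * (1 - (ν : ℂ) * u) ^ (a + 2))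

theorem circleIntegral_add {f g : ℂ → ℂ} {c : ℂ} {R : ℝ} (hf : CircleIntegrable f c R)
    (hg : CircleIntegrable g c R) :
    (∮ z in C(c, R), (f z + g z)) = (∮ z in C(c, R), f z) + ∮ z in C(c, R), g z := by
  simp only [circleIntegral, smul_add]
  exact intervalIntegral.integral_add hf.out hg.out

namespace Good
variable {ν R : ℝ} (h : Good ν R)
include h

lemma h1 : 0 < 1 + ν := by have := abs_lt.mp h.hν; linarith
lemma hcr0 : 0 < 1 / (1 + ν) := by have := h.h1; positivity
lemma hR0 : 0 < R := h.hcr0.trans h.hR1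
lemma hc1 : (1 : ℂ) + (ν : ℂ) ≠ 0 := by
  have := h.h1.ne'
  exact_mod_cast fun h0 => this (by exact_mod_cast h0)

lemma mem0 : (0 : ℂ) ∈ ball (Cc ν) R := by
  rw [mem_ball, dist_eq, Cc_eq, zero_sub, norm_neg, Complex.norm_real, Real.norm_eq_abs,
    abs_of_pos (by have := h.h1; positivity), ← one_div]
  exact h.hR1

lemma mem1 : (1 : ℂ) ∈ ball (Cc ν) R := by
  rw [mem_ball, dist_eq, Cc_eq]
  have h2 : (1 : ℂ) - (((1 + ν)⁻¹ : ℝ) : ℂ) = ((ν / (1 + ν) : ℝ) : ℂ) := by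
    have h3 := h.hc1
    push_cast
    field_simp
    ring
  rw [h2, Complex.norm_real, Real.norm_eq_abs]
  have h3 : |ν / (1 + ν)| = |ν| / (1 + ν) := by rw [abs_div, abs_of_pos h.h1]
  rw [h3]
  calc |ν| / (1 + ν) ≤ 1 / (1 + ν) := by gcongr; exacts [h.h1.le, h.hν.le]
    _ < R := h.hR1

lemma hBne : ∀ z ∈ closedBall (Cc ν) R, 1 - (ν : ℂ) * z ≠ 0 := by
  intro z hz heq
  rcases eq_or_ne ν 0 with h0 | h0
  · simp [h0] at heq
  · have hν0 : (ν : ℂ) ≠ 0 := by exact_mod_cast h0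
    have hz' : z = ((ν⁻¹ : ℝ) : ℂ) := by
      push_cast
      field_simp at heq ⊢
      linear_combination -heq
    rw [mem_closedBall, dist_eq, hz', Cc_eq] at hz
    have h4 : ((ν⁻¹ : ℝ) : ℂ) - (((1 + ν)⁻¹ : ℝ) : ℂ) = ((ν⁻¹ - (1 + ν)⁻¹ : ℝ) : ℂ) := by
      push_cast; ring
    rw [h4, Complex.norm_real, Real.norm_eq_abs] at hz
    have h5 := h.hR2 h0
    rw [one_div, one_div] at h5
    linarith

lemma sphere_ne0 : ∀ u ∈ sphere (Cc ν) R, u ≠ 0 := by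
  intro u hu h0
  subst h0
  rw [mem_sphere] at hu
  exact absurd (mem_ball.mp h.mem0) (by rw [dist_comm] at hu ⊢; exact hu ▸ lt_irrefl _)

lemma sphere_ne1 : ∀ u ∈ sphere (Cc ν) R, (1 : ℂ) - u ≠ 0 := by
  intro u hu h0
  have h2 : u = 1 := by linear_combination -h0
  subst h2
  rw [mem_sphere] at hu
  exact absurd (mem_ball.mp h.mem1) (hu ▸ lt_irrefl _)

lemma sphere_neB : ∀ u ∈ sphere (Cc ν) R, (1 : ℂ) - (ν : ℂ) * u ≠ 0 := fun u hu =>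
  h.hBne u (sphere_subset_closedBall hu)

lemma sphere_abs_lt :
    ∀ u ∈ sphere (Cc ν) R, ‖1 - (ν : ℂ) * u‖ < ‖1 - u‖ := by
  intro u hu
  rw [mem_sphere, dist_eq, Cc_eq] at hu
  have hns : normSq (u - (((1 + ν)⁻¹ : ℝ) : ℂ)) = R ^ 2 := by
    rw [← Complex.sq_norm, hu]
  have h1 := h.h1
  have hkey : normSq (1 - u) - normSq (1 - (ν : ℂ) * u) =
      (1 - ν) * (1 + ν) * (normSq (u - (((1 + ν)⁻¹ : ℝ) : ℂ)) - ((1 + ν)⁻¹) ^ 2) := by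
    simp only [normSq_apply, Complex.sub_re, Complex.sub_im, Complex.one_re, Complex.one_im,
      Complex.mul_re, Complex.mul_im, Complex.ofReal_re, Complex.ofReal_im]
    field_simp
    ring
  have hRgt : ((1 + ν)⁻¹) ^ 2 < R ^ 2 := by
    have h2 : (1 + ν)⁻¹ < R := by rw [← one_div]; exact h.hR1
    have h3 : (0:ℝ) < (1 + ν)⁻¹ := by positivity
    nlinarith
  have hlt : normSq (1 - (ν : ℂ) * u) < normSq (1 - u) := by
    have hν1 : ν < 1 := (abs_lt.mp h.hν).2
    have hpos : 0 < (1 - ν) * (1 + ν) * (normSq (u - (((1 + ν)⁻¹ : ℝ) : ℂ)) - ((1 + ν)⁻¹) ^ 2) :=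
      mul_pos (mul_pos (by linarith) h1) (by rw [hns]; linarith)
    linarith
  rw [Complex.norm_def, Complex.norm_def]
  exact Real.sqrt_lt_sqrt (normSq_nonneg _) hlt

lemma contZ (e : ℤ) : ContinuousOn (fun u : ℂ => u ^ e) (sphere (Cc ν) R) :=
  continuousOn_id.zpow₀ e fun u hu => Or.inl (h.sphere_ne0 u hu)
lemma contA (e : ℤ) : ContinuousOn (fun u : ℂ => (1 - u) ^ e) (sphere (Cc ν) R) :=
  (continuousOn_const.sub continuousOn_id).zpow₀ e fun u hu => Or.inl (h.sphere_ne1 u hu)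
lemma contB (e : ℤ) : ContinuousOn (fun u : ℂ => (1 - (ν : ℂ) * u) ^ e) (sphere (Cc ν) R) :=
  (continuousOn_const.sub (continuousOn_const.mul continuousOn_id)).zpow₀ e
    fun u hu => Or.inl (h.sphere_neB u hu)
lemma contInv : ContinuousOn (fun u : ℂ => u⁻¹) (sphere (Cc ν) R) := by
  have := h.contZ (-1); simpa [zpow_neg, zpow_one] using this
lemma contInv1 : ContinuousOn (fun u : ℂ => (1 - u)⁻¹) (sphere (Cc ν) R) := by
  have := h.contA (-1); simpa [zpow_neg, zpow_one] using this

lemma contIg (n a : ℤ) : ContinuousOn (Ig ν n a) (sphere (Cc ν) R) := by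
  apply ContinuousOn.div (continuousOn_const.mul (h.contA a)) ((h.contZ n).mul (h.contB (a + 2)))
  intro u hu
  exact mul_ne_zero (zpow_ne_zero _ (h.sphere_ne0 u hu)) (zpow_ne_zero _ (h.sphere_neB u hu))

lemma int_inv0 : (∮ u in C(Cc ν, R), u⁻¹) = 2 * Real.pi * I := by
  simpa using circleIntegral.integral_sub_inv_of_mem_ball h.mem0

lemma int_inv1 : (∮ u in C(Cc ν, R), (1 - u)⁻¹) = -(2 * Real.pi * I) := by
  have h2 : (fun u : ℂ => (1 - u)⁻¹) = fun u : ℂ => (-1 : ℂ) * (u - 1)⁻¹ := by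
    funext u
    rw [show (1 : ℂ) - u = -(u - 1) by ring, inv_neg]
    ring
  rw [h2, circleIntegral.integral_const_mul, circleIntegral.integral_sub_inv_of_mem_ball h.mem1]
  ring

omit h in
lemma int_one_sub_zpow (e : ℤ) (he : e ≠ -1) :
    (∮ u in C(Cc ν, R), (1 - u) ^ e) = 0 := by
  have h2 : (fun u : ℂ => (1 - u) ^ e) = fun u : ℂ => (-1 : ℂ) ^ e * (u - 1) ^ e := by
    funext u
    rw [show (1 : ℂ) - u = (-1) * (u - 1) by ring, mul_zpow]
  rw [h2, circleIntegral.integral_const_mul, circleIntegral.integral_sub_zpow_of_ne he, mul_zero]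

lemma intJ (s : ℕ) : (∮ u in C(Cc ν, R), (1 - u) ^ (-((s : ℤ) + 1)) * u⁻¹) = 0 := by
  induction s with
  | zero =>
    have hcongr : EqOn (fun u : ℂ => (1 - u) ^ (-((0:ℤ) + 1)) * u⁻¹)
        (fun u : ℂ => u⁻¹ + (1 - u)⁻¹) (sphere (Cc ν) R) := by
      intro u hu
      have h0 := h.sphere_ne0 u hu
      have h1 := h.sphere_ne1 u hu
      show (1 - u) ^ (-((0:ℤ) + 1)) * u⁻¹ = u⁻¹ + (1 - u)⁻¹
      rw [show (-((0:ℤ) + 1)) = -1 by ring, zpow_neg, zpow_one]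
      field_simp
      ring
    simp only [Nat.cast_zero]
    rw [circleIntegral.integral_congr h.hR0.le hcongr]
    rw [circleIntegral_add (h.contInv.circleIntegrable h.hR0.le)
      (h.contInv1.circleIntegrable h.hR0.le), h.int_inv0, h.int_inv1]
    ring
  | succ n ih =>
    have hcongr : EqOn (fun u : ℂ => (1 - u) ^ (-((n + 1 : ℕ) : ℤ) - 1) * u⁻¹)
        (fun u : ℂ => (1 - u) ^ (-((n : ℤ) + 1)) * u⁻¹ + (1 - u) ^ (-((n : ℤ) + 2)) )
        (sphere (Cc ν) R) := by
      intro u hu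
      have h0 := h.sphere_ne0 u hu
      have h1 := h.sphere_ne1 u hu
      show (1 - u) ^ (-((n + 1 : ℕ) : ℤ) - 1) * u⁻¹ = _
      push_cast
      rw [show (-((n:ℤ) + 1) - 1) = -((n:ℤ) + 2) by ring]
      rw [show (-((n:ℤ) + 1)) = -((n:ℤ) + 2) + 1 by ring]
      rw [zpow_add₀ h1]
      field_simp
      ring
    rw [show (-(((n+1:ℕ) : ℤ) + 1)) = -((n + 1 : ℕ) : ℤ) - 1 by ring]
    rw [circleIntegral.integral_congr h.hR0.le hcongr]
    rw [circleIntegral_add (f := fun u : ℂ => (1 - u) ^ (-((n : ℤ) + 1)) * u⁻¹)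
      (g := fun u : ℂ => (1 - u) ^ (-((n : ℤ) + 2)))
      (((h.contA _).mul h.contInv).circleIntegrable h.hR0.le)
      ((h.contA _).circleIntegrable h.hR0.le),
      ih, int_one_sub_zpow _ (by omega), zero_add]

lemma intT : ∀ p : ℕ, ∀ s : ℕ, p + 2 ≤ s →
    (∮ u in C(Cc ν, R), (1 - (ν : ℂ) * u) ^ (p : ℤ) * ((1 - u) ^ (-(s : ℤ)) * u⁻¹)) = 0 := by
  intro p
  induction p with
  | zero =>
    intro s hs
    obtain ⟨t, rfl⟩ : ∃ t, s = t + 1 := ⟨s - 1, by omega⟩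
    have hcongr : EqOn
        (fun u : ℂ => (1 - (ν : ℂ) * u) ^ ((0 : ℕ) : ℤ) * ((1 - u) ^ (-((t + 1 : ℕ) : ℤ)) * u⁻¹))
        (fun u : ℂ => (1 - u) ^ (-((t : ℤ) + 1)) * u⁻¹) (sphere (Cc ν) R) := by
      intro u hu
      push_cast
      simp [zpow_zero]
    rw [circleIntegral.integral_congr h.hR0.le hcongr, h.intJ t]
  | succ p ih =>
    intro s hs
    obtain ⟨t, rfl⟩ : ∃ t, s = t + 1 := ⟨s - 1, by omega⟩
    have ht : p + 2 ≤ t := by omega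
    have hcongr : EqOn
        (fun u : ℂ => (1 - (ν : ℂ) * u) ^ ((p + 1 : ℕ) : ℤ) * ((1 - u) ^ (-((t + 1 : ℕ) : ℤ)) * u⁻¹))
        (fun u : ℂ => (1 - (ν : ℂ)) * ((1 - (ν : ℂ) * u) ^ (p : ℤ) * ((1 - u) ^ (-((t + 1 : ℕ) : ℤ)) * u⁻¹))
          + (ν : ℂ) * ((1 - (ν : ℂ) * u) ^ (p : ℤ) * ((1 - u) ^ (-((t : ℕ) : ℤ)) * u⁻¹)))
        (sphere (Cc ν) R) := by
      intro u hu
      have h0 := h.sphere_ne0 u hu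
      have h1 := h.sphere_ne1 u hu
      have hB := h.sphere_neB u hu
      push_cast
      rw [zpow_add₀ hB, zpow_one]
      rw [show (-((t : ℤ) + 1)) = -(t : ℤ) + (-1) by ring, zpow_add₀ h1]
      simp only [zpow_neg, zpow_one, zpow_natCast]
      have key : (1 - (ν : ℂ) * u) * (1 - u)⁻¹ = (1 - (ν : ℂ)) * (1 - u)⁻¹ + ν := by
        field_simp
        ring
      linear_combination ((1 - (ν : ℂ) * u) ^ p * (((1 - u) ^ t)⁻¹) * u⁻¹) * key
    rw [circleIntegral.integral_congr h.hR0.le hcongr]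
    rw [circleIntegral_add
      (f := fun u : ℂ => (1 - (ν : ℂ)) * ((1 - (ν : ℂ) * u) ^ (p : ℤ) * ((1 - u) ^ (-((t + 1 : ℕ) : ℤ)) * u⁻¹)))
      (g := fun u : ℂ => (ν : ℂ) * ((1 - (ν : ℂ) * u) ^ (p : ℤ) * ((1 - u) ^ (-((t : ℕ) : ℤ)) * u⁻¹)))
      ((continuousOn_const.mul ((h.contB _).mul ((h.contA _).mul h.contInv))).circleIntegrable h.hR0.le)
      ((continuousOn_const.mul ((h.contB _).mul ((h.contA _).mul h.contInv))).circleIntegrable h.hR0.le)]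
    rw [circleIntegral.integral_const_mul, circleIntegral.integral_const_mul]
    rw [ih (t + 1) (by omega), ih t ht]
    ring

lemma diffB (e : ℤ) : ∀ w ∈ ball (Cc ν) R,
    DifferentiableAt ℂ (fun w : ℂ => (1 - (ν : ℂ) * w) ^ e) w := fun w hw =>
  DifferentiableAt.zpow ((differentiableAt_const _).sub
    ((differentiableAt_const _).mul differentiableAt_id))
    (Or.inl (h.hBne w (ball_subset_closedBall hw)))

lemma contBcb (e : ℤ) : ContinuousOn (fun w : ℂ => (1 - (ν : ℂ) * w) ^ e) (closedBall (Cc ν) R) :=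
  fun w hw => (ContinuousAt.zpow₀ ((continuousAt_const).sub
    ((continuousAt_const).mul continuousAt_id)) e (Or.inl (h.hBne w hw))).continuousWithinAt

lemma hμ1 : (ν : ℂ) - 1 ≠ 0 := by
  have h1 := h.hBne 1 (by rw [mem_closedBall]; exact (mem_ball.mp h.mem1).le)
  intro h0
  apply h1
  rw [mul_one]
  linear_combination -h0

omit h in
lemma two_pi_I_ne : (2 * (Real.pi : ℂ) * I) ≠ 0 := by
  simp [Real.pi_ne_zero, I_ne_zero]

lemma int_base_ge (k : ℤ) (hk : 0 ≤ k) :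
    (∮ u in C(Cc ν, R), Ig ν 1 k u) = (2 * Real.pi * I) * ((ν : ℂ) - 1) := by
  set f : ℂ → ℂ := fun w => ((ν : ℂ) - 1) * (1 - w) ^ k * (1 - (ν : ℂ) * w) ^ (-(k + 2)) with hf
  have hcongr : EqOn (fun u => Ig ν 1 k u) (fun u => (u - 0)⁻¹ • f u) (sphere (Cc ν) R) := by
    intro u hu
    have h0 := h.sphere_ne0 u hu
    have hB := h.sphere_neB u hu
    simp only [Ig, hf, smul_eq_mul, sub_zero, zpow_one, zpow_neg]
    field_simp
  rw [circleIntegral.integral_congr h.hR0.le hcongr]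
  have hC : ContinuousOn f (closedBall (Cc ν) R) := by
    apply ContinuousOn.mul ?_ (h.contBcb _)
    apply continuousOn_const.mul
    intro w hw
    exact (ContinuousAt.zpow₀ (continuousAt_const.sub continuousAt_id) k
      (Or.inr hk)).continuousWithinAt
  have hD : ∀ w ∈ ball (Cc ν) R \ (∅ : Set ℂ), DifferentiableAt ℂ f w := by
    intro w hw
    apply DifferentiableAt.mul ?_ (h.diffB _ w hw.1)
    apply (differentiableAt_const _).mul
    exact DifferentiableAt.zpow ((differentiableAt_const _).sub differentiableAt_id) (Or.inr hk)
  have hval := circleIntegral_sub_inv_smul_of_differentiable_on_off_countable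
    countable_empty h.mem0 hC hD
  rw [hval]
  have hf0 : f 0 = (ν : ℂ) - 1 := by simp [hf]
  rw [hf0, smul_eq_mul]

lemma int_base_neg1 :
    (∮ u in C(Cc ν, R), Ig ν 1 (-1) u) = (2 * Real.pi * I) * (ν : ℂ) := by
  set f : ℂ → ℂ := fun w => ((ν : ℂ) - 1) * (1 - (ν : ℂ) * w) ^ (-1 : ℤ) with hf
  have hcongr : EqOn (fun u => Ig ν 1 (-1) u)
      (fun u => (u - 0)⁻¹ • f u - (u - 1)⁻¹ • f u) (sphere (Cc ν) R) := by
    intro u hu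
    have h0 := h.sphere_ne0 u hu
    have h1 := h.sphere_ne1 u hu
    have hB := h.sphere_neB u hu
    have h1' : u - 1 ≠ 0 := fun hz => h1 (by linear_combination -hz)
    simp only [Ig, hf, smul_eq_mul, sub_zero, zpow_one, zpow_neg, zpow_one]
    rw [show (-1 : ℤ) + 2 = 1 by ring, zpow_one]
    field_simp
    ring
  rw [circleIntegral.integral_congr h.hR0.le hcongr]
  have hC : ContinuousOn f (closedBall (Cc ν) R) := continuousOn_const.mul (h.contBcb _)
  have hD : ∀ w ∈ ball (Cc ν) R \ (∅ : Set ℂ), DifferentiableAt ℂ f w := fun w hw =>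
    (differentiableAt_const _).mul (h.diffB _ w hw.1)
  have ci1 : CircleIntegrable (fun z : ℂ => (z - 0)⁻¹ • f z) (Cc ν) R := by
    refine ContinuousOn.circleIntegrable h.hR0.le ?_
    exact ((continuousOn_id.sub continuousOn_const).inv₀ (fun u hu => by
      simpa using h.sphere_ne0 u hu)).smul (hC.mono sphere_subset_closedBall)
  have ci2 : CircleIntegrable (fun z : ℂ => (z - 1)⁻¹ • f z) (Cc ν) R := by
    refine ContinuousOn.circleIntegrable h.hR0.le ?_
    exact ((continuousOn_id.sub continuousOn_const).inv₀ (fun u hu => fun hz =>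
      (h.sphere_ne1 u hu) (by simp only [Pi.sub_apply, id_eq] at hz; linear_combination -hz))).smul
      (hC.mono sphere_subset_closedBall)
  rw [circleIntegral.integral_sub ci1 ci2]
  rw [circleIntegral_sub_inv_smul_of_differentiable_on_off_countable countable_empty h.mem0 hC hD,
    circleIntegral_sub_inv_smul_of_differentiable_on_off_countable countable_empty h.mem1 hC hD]
  have hB1 : (1 : ℂ) - (ν : ℂ) ≠ 0 := by
    have := h.hBne 1 (mem_ball.mp h.mem1).le
    simpa using this
  have hf0 : f 0 = (ν : ℂ) - 1 := by simp [hf]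
  have hf1 : f 1 = ((ν : ℂ) - 1) * ((1 : ℂ) - (ν : ℂ))⁻¹ := by simp [hf]
  rw [hf0, hf1, smul_eq_mul, smul_eq_mul]
  field_simp
  ring

lemma int_base_low (k : ℤ) (hk : k ≤ -2) :
    (∮ u in C(Cc ν, R), Ig ν 1 k u) = 0 := by
  set j : ℕ := (-2 - k).toNat with hj
  have hjk : (j : ℤ) = -2 - k := by omega
  have hcongr : EqOn (fun u => Ig ν 1 k u)
      (fun u : ℂ => ((ν : ℂ) - 1) *
        ((1 - (ν : ℂ) * u) ^ (j : ℤ) * ((1 - u) ^ (-((j + 2 : ℕ) : ℤ)) * u⁻¹)))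
      (sphere (Cc ν) R) := by
    intro u hu
    have h0 := h.sphere_ne0 u hu
    have h1 := h.sphere_ne1 u hu
    have hB := h.sphere_neB u hu
    simp only [Ig, zpow_one]
    have e1 : k = -((j + 2 : ℕ) : ℤ) := by omega
    rw [e1]
    rw [show (-((j + 2 : ℕ) : ℤ) + 2) = -(j : ℤ) by push_cast; ring]
    rw [zpow_neg, zpow_neg]
    field_simp
  rw [circleIntegral.integral_congr h.hR0.le hcongr, circleIntegral.integral_const_mul,
    h.intT j (j + 2) le_rfl, mul_zero]

/-- The base case of the induction. -/
lemma base (x z : ℤ) : phiKer ν x z =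
    (2 * (Real.pi : ℂ) * I)⁻¹ * ∮ u in C(Cc ν, R), Ig ν 1 (z - x) u := by
  rcases le_or_gt x z with hxz | hxz
  · rw [h.int_base_ge (z - x) (by omega), phiKer, if_pos hxz]
    rw [inv_mul_cancel_left₀ two_pi_I_ne]
  · rcases eq_or_lt_of_le (by omega : z ≤ x - 1) with hz | hz
    · rw [show z - x = -1 by omega, h.int_base_neg1, phiKer, if_neg (by omega), if_pos (by omega)]
      rw [inv_mul_cancel_left₀ two_pi_I_ne]
    · rw [h.int_base_low (z - x) (by omega), phiKer, if_neg (by omega), if_neg (by omega), mul_zero]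

lemma exists_q : ∃ q : ℝ, 0 ≤ q ∧ q < 1 ∧
    ∀ u ∈ sphere (Cc ν) R, ‖(1 - (ν : ℂ) * u) * (1 - u)⁻¹‖ ≤ q := by
  have hne : (sphere (Cc ν) R).Nonempty := NormedSpace.sphere_nonempty.mpr h.hR0.le
  have hcont : ContinuousOn (fun u : ℂ => ‖(1 - (ν : ℂ) * u) * (1 - u)⁻¹‖) (sphere (Cc ν) R) :=
    (((continuousOn_const.sub (continuousOn_const.mul continuousOn_id)).mul h.contInv1)).norm
  obtain ⟨u₀, hu₀, hmax⟩ := (isCompact_sphere _ _).exists_isMaxOn hne hcont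
  refine ⟨_, norm_nonneg _, ?_, fun u hu => hmax hu⟩
  rw [norm_mul, norm_inv, ← div_eq_mul_inv,
    div_lt_one (norm_pos_iff.mpr (h.sphere_ne1 u₀ hu₀))]
  exact h.sphere_abs_lt u₀ hu₀

lemma Ig_shift (n : ℤ) (a : ℤ) (t : ℕ) (u : ℂ) (hu : u ∈ sphere (Cc ν) R) :
    Ig ν n (a - t) u = Ig ν n a u * ((1 - (ν : ℂ) * u) * (1 - u)⁻¹) ^ t := by
  have h0 := h.sphere_ne0 u hu
  have h1 := h.sphere_ne1 u hu
  have hB := h.sphere_neB u hu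
  simp only [Ig]
  rw [show a - (t : ℤ) = a + (-(t : ℤ)) by ring, zpow_add₀ h1,
    show a + (-(t : ℤ)) + 2 = (a + 2) + (-(t : ℤ)) by ring, zpow_add₀ hB]
  rw [zpow_neg, zpow_neg, zpow_natCast, zpow_natCast, mul_pow, inv_pow]
  have hAt : ((1 - u) ^ t : ℂ) ≠ 0 := pow_ne_zero _ h1
  have hBt : ((1 - (ν : ℂ) * u) ^ t : ℂ) ≠ 0 := pow_ne_zero _ hB
  have hUn : (u ^ n : ℂ) ≠ 0 := zpow_ne_zero _ h0
  have hBa : ((1 - (ν : ℂ) * u) ^ (a + 2) : ℂ) ≠ 0 := zpow_ne_zero _ hB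
  simp only [div_eq_mul_inv, mul_inv, inv_inv]
  ring

/-- Pointwise sum identity on the sphere. -/
lemma sum_identity (m : ℕ) (x z : ℤ) (u : ℂ) (hu : u ∈ sphere (Cc ν) R) :
    ∑' t : ℕ, phiKer ν x (x - 1 + (t : ℤ)) * Ig ν ((m : ℤ) + 1) (z - (x - 1 + (t : ℤ)) + m) u
      = Ig ν ((m : ℤ) + 2) (z - x + m + 1) u := by
  have h0 := h.sphere_ne0 u hu
  have h1 := h.sphere_ne1 u hu
  have hB := h.sphere_neB u hu
  have hμ := h.hμ1
  set w : ℂ := (1 - (ν : ℂ) * u) * (1 - u)⁻¹ with hw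
  have hwlt : ‖w‖ < 1 := by
    rw [hw, norm_mul, norm_inv, ← div_eq_mul_inv,
      div_lt_one (norm_pos_iff.mpr h1)]
    exact h.sphere_abs_lt u hu
  set n : ℤ := (m : ℤ) + 1 with hn
  set a : ℤ := z - x + m with ha
  have hsh : ∀ t : ℕ,
      phiKer ν x (x - 1 + ((t + 1 : ℕ) : ℤ)) * Ig ν n (z - (x - 1 + ((t + 1 : ℕ) : ℤ)) + m) u
        = (((ν : ℂ) - 1) * Ig ν n a u) * w ^ t := by
    intro t
    have hk : phiKer ν x (x - 1 + ((t + 1 : ℕ) : ℤ)) = (ν : ℂ) - 1 := by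
      rw [phiKer, if_pos (by push_cast; omega)]
    rw [hk, show z - (x - 1 + ((t + 1 : ℕ) : ℤ)) + m = a - t by push_cast; omega,
      h.Ig_shift n a t u hu]
    ring
  have hsum1 : Summable (fun t : ℕ =>
      phiKer ν x (x - 1 + ((t + 1 : ℕ) : ℤ)) * Ig ν n (z - (x - 1 + ((t + 1 : ℕ) : ℤ)) + m) u) := by
    rw [funext hsh]
    exact (summable_geometric_of_norm_lt_one hwlt).mul_left _
  have hsum : Summable (fun t : ℕ =>
      phiKer ν x (x - 1 + (t : ℤ)) * Ig ν n (z - (x - 1 + (t : ℤ)) + m) u) := by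
    refine (summable_nat_add_iff 1).mp ?_
    exact_mod_cast hsum1
  rw [Summable.tsum_eq_zero_add hsum]
  have hzero : phiKer ν x (x - 1 + ((0 : ℕ) : ℤ)) * Ig ν n (z - (x - 1 + ((0 : ℕ) : ℤ)) + m) u
      = (ν : ℂ) * Ig ν n (a + 1) u := by
    rw [show (x - 1 + ((0 : ℕ) : ℤ)) = x - 1 by push_cast; ring, phiKer, if_neg (by omega),
      if_pos rfl, show z - (x - 1) + m = a + 1 by omega]
  have htail : ∑' t : ℕ,
      phiKer ν x (x - 1 + ((t + 1 : ℕ) : ℤ)) * Ig ν n (z - (x - 1 + ((t + 1 : ℕ) : ℤ)) + m) u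
        = (((ν : ℂ) - 1) * Ig ν n a u) * (1 - w)⁻¹ := by
    rw [funext hsh, tsum_mul_left, tsum_geometric_of_norm_lt_one hwlt]
  have hcast : ∀ t : ℕ, (((t : ℤ) + 1)) = ((t + 1 : ℕ) : ℤ) := by intro t; push_cast; ring
  calc phiKer ν x (x - 1 + ((0:ℕ) : ℤ)) * Ig ν n (z - (x - 1 + ((0:ℕ) : ℤ)) + m) u
        + ∑' t : ℕ, phiKer ν x (x - 1 + ((t + 1 : ℕ) : ℤ)) *
            Ig ν n (z - (x - 1 + ((t + 1 : ℕ) : ℤ)) + m) u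
      = (ν : ℂ) * Ig ν n (a + 1) u + (((ν : ℂ) - 1) * Ig ν n a u) * (1 - w)⁻¹ := by
        rw [hzero, htail]
    _ = Ig ν ((m : ℤ) + 2) (z - x + m + 1) u := by
        have hw1 : (1 : ℂ) - w = ((ν : ℂ) - 1) * u * (1 - u)⁻¹ := by
          rw [hw]
          field_simp
          ring
        rw [hw1]
        simp only [Ig]
        rw [show z - x + (m : ℤ) + 1 = a + 1 by rw [ha]]
        rw [show a + 1 + 2 = (a + 2) + 1 by ring, zpow_add₀ hB, zpow_one,
          zpow_add₀ h1 a 1, zpow_one, show (m : ℤ) + 2 = n + 1 by rw [hn]; ring,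
          zpow_add₀ h0 n 1, zpow_one]
        have hAa : ((1 - u) ^ a : ℂ) ≠ 0 := zpow_ne_zero _ h1
        have hBa : ((1 - (ν : ℂ) * u) ^ (a + 2) : ℂ) ≠ 0 := zpow_ne_zero _ hB
        have hUn : (u ^ n : ℂ) ≠ 0 := zpow_ne_zero _ h0
        field_simp
        ring

/-- Interchange of sum and circle integral, plus evaluation of the geometric sum. -/
lemma step_sum (m : ℕ) (x z : ℤ) :
    ∑' t : ℕ, (∮ u in C(Cc ν, R),
        phiKer ν x (x - 1 + (t : ℤ)) * Ig ν ((m : ℤ) + 1) (z - (x - 1 + (t : ℤ)) + m) u)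
      = ∮ u in C(Cc ν, R), Ig ν ((m : ℤ) + 2) (z - x + m + 1) u := by
  set c : ℂ := Cc ν with hc
  set G : ℕ → ℂ → ℂ :=
    fun t u => phiKer ν x (x - 1 + (t : ℤ)) * Ig ν ((m : ℤ) + 1) (z - (x - 1 + (t : ℤ)) + m) u
    with hG
  have hGcont : ∀ t, ContinuousOn (G t) (sphere c R) := fun t =>
    continuousOn_const.mul (h.contIg _ _)
  have hGci : ∀ t, CircleIntegrable (G t) c R := fun t => (hGcont t).circleIntegrable h.hR0.le
  obtain ⟨q, hq0, hq1, hq⟩ := h.exists_q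
  obtain ⟨C1, hC1⟩ := (isCompact_sphere c R).exists_bound_of_continuousOn
    (h.contIg ((m : ℤ) + 1) (z - x + m))
  obtain ⟨C0, hC0⟩ := (isCompact_sphere c R).exists_bound_of_continuousOn (hGcont 0)
  set D : ℕ → ℝ := fun t => Nat.casesOn t (max C0 0)
    (fun r => ‖(ν : ℂ) - 1‖ * max C1 0 * q ^ r) with hDdef
  have hD : ∀ t, ∀ u ∈ sphere c R, ‖G t u‖ ≤ D t := by
    intro t u hu
    cases t with
    | zero => exact le_trans (hC0 u hu) (le_max_left _ _)
    | succ r =>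
      have hk : phiKer ν x (x - 1 + ((r + 1 : ℕ) : ℤ)) = (ν : ℂ) - 1 := by
        rw [phiKer, if_pos (by push_cast; omega)]
      have hGr : G (r + 1) u
          = (((ν : ℂ) - 1) * Ig ν ((m : ℤ) + 1) (z - x + m) u)
            * ((1 - (ν : ℂ) * u) * (1 - u)⁻¹) ^ r := by
        rw [hG]
        simp only []
        rw [hk, show z - (x - 1 + ((r + 1 : ℕ) : ℤ)) + m = (z - x + m) - r by push_cast; omega,
          h.Ig_shift ((m : ℤ) + 1) (z - x + m) r u hu]
        ring
      rw [hGr]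
      have hnw : ‖((1 - (ν : ℂ) * u) * (1 - u)⁻¹) ^ r‖ ≤ q ^ r := by
        rw [norm_pow]
        exact pow_le_pow_left₀ (norm_nonneg _) (hq u hu) r
      calc ‖(((ν : ℂ) - 1) * Ig ν ((m : ℤ) + 1) (z - x + m) u)
            * ((1 - (ν : ℂ) * u) * (1 - u)⁻¹) ^ r‖
          = ‖(ν : ℂ) - 1‖ * ‖Ig ν ((m : ℤ) + 1) (z - x + m) u‖
            * ‖((1 - (ν : ℂ) * u) * (1 - u)⁻¹) ^ r‖ := by rw [norm_mul, norm_mul]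
        _ ≤ ‖(ν : ℂ) - 1‖ * max C1 0 * q ^ r := by
            apply mul_le_mul ?_ hnw (norm_nonneg _) (by positivity)
            exact mul_le_mul_of_nonneg_left (le_trans (hC1 u hu) (le_max_left _ _))
              (norm_nonneg _)
        _ = D (r + 1) := rfl
  have hDsum : Summable D := by
    refine (summable_nat_add_iff 1).mp ?_
    have he : (fun n : ℕ => D (n + 1)) = fun n => ‖(ν : ℂ) - 1‖ * max C1 0 * q ^ n := rfl
    rw [he]
    exact (summable_geometric_of_lt_one hq0 hq1).mul_left _
  have hIoc : ∀ f : ℂ → ℂ, (∮ u in C(c, R), f u)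
      = ∫ θ in Ioc (0 : ℝ) (2 * Real.pi), deriv (circleMap c R) θ • f (circleMap c R θ) := by
    intro f
    rw [circleIntegral, intervalIntegral.integral_of_le Real.two_pi_pos.le]
  have hInt : ∀ t : ℕ, Integrable
      (fun θ : ℝ => deriv (circleMap c R) θ • G t (circleMap c R θ))
      (volume.restrict (Ioc (0 : ℝ) (2 * Real.pi))) := fun t => ((hGci t).out).1
  have hb : ∀ t : ℕ, ∀ θ : ℝ, ‖deriv (circleMap c R) θ • G t (circleMap c R θ)‖ ≤ R * D t := by
    intro t θ
    rw [norm_smul, deriv_circleMap]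
    have h1 : ‖circleMap 0 R θ * I‖ = R := by
      rw [norm_mul, norm_circleMap_zero, Complex.norm_I, mul_one,
        abs_of_pos h.hR0]
    rw [h1]
    exact mul_le_mul_of_nonneg_left (hD t _ (circleMap_mem_sphere c h.hR0.le θ)) h.hR0.le
  have hSum : Summable fun t : ℕ => ∫ θ in Ioc (0 : ℝ) (2 * Real.pi),
      ‖deriv (circleMap c R) θ • G t (circleMap c R θ)‖ := by
    refine Summable.of_nonneg_of_le (fun t => integral_nonneg fun θ => norm_nonneg _)
      (fun t => ?_) ((hDsum.mul_left (2 * Real.pi * R)))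
    calc (∫ θ in Ioc (0 : ℝ) (2 * Real.pi), ‖deriv (circleMap c R) θ • G t (circleMap c R θ)‖)
        ≤ ∫ _ in Ioc (0 : ℝ) (2 * Real.pi), R * D t :=
          integral_mono (hInt t).norm (integrable_const _) (fun θ => hb t θ)
      _ = 2 * Real.pi * R * D t := by
          rw [integral_const]
          simp [Real.volume_Ioc, ENNReal.toReal_ofReal Real.two_pi_pos.le]
          rw [max_eq_left (by positivity)]
          ring
    -- note: goal is ≤ 2 * Real.pi * R * D t
  have hswap := MeasureTheory.integral_tsum_of_summable_integral_norm hInt hSum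
  calc ∑' t : ℕ, (∮ u in C(c, R), G t u)
      = ∑' t : ℕ, ∫ θ in Ioc (0 : ℝ) (2 * Real.pi),
          deriv (circleMap c R) θ • G t (circleMap c R θ) := by
        exact tsum_congr fun t => hIoc (G t)
    _ = ∫ θ in Ioc (0 : ℝ) (2 * Real.pi),
          ∑' t : ℕ, deriv (circleMap c R) θ • G t (circleMap c R θ) := hswap
    _ = ∫ θ in Ioc (0 : ℝ) (2 * Real.pi),
          deriv (circleMap c R) θ • ∑' t : ℕ, G t (circleMap c R θ) := by
        congr 1
        funext θ
        simp only [smul_eq_mul]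
        exact tsum_mul_left
    _ = ∮ u in C(c, R), (∑' t : ℕ, G t u) := (hIoc (fun u => ∑' t : ℕ, G t u)).symm
    _ = ∮ u in C(c, R), Ig ν ((m : ℤ) + 2) (z - x + m + 1) u := by
        apply circleIntegral.integral_congr h.hR0.le
        intro u hu
        exact h.sum_identity m x z u hu

/-- The main induction. -/
lemma key (m : ℕ) : ∀ x z : ℤ, phiIter ν m x z =
    (2 * (Real.pi : ℂ) * I)⁻¹ * ∮ u in C(Cc ν, R), Ig ν ((m : ℤ) + 1) (z - x + m) u := by
  induction m with
  | zero =>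
    intro x z
    have hb := h.base x z
    show phiKer ν x z = _
    rw [hb]
    norm_num
  | succ m ih =>
    intro x z
    show (∑' y : ℤ, phiKer ν x y * phiIter ν m y z) = _
    have h1 : (∑' y : ℤ, phiKer ν x y * phiIter ν m y z)
        = ∑' t : ℕ, phiKer ν x (x - 1 + (t : ℤ)) * phiIter ν m (x - 1 + (t : ℤ)) z := by
      refine (Function.Injective.tsum_eq (g := fun t : ℕ => x - 1 + (t : ℤ)) ?_ ?_).symm
      · intro a b hab
        simpa using hab
      · intro y hy
        by_contra hyr
        have hy2 : y ≤ x - 2 := by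
          rcases le_or_gt (x - 1) y with hge | hlt
          · exact absurd ⟨(y - (x - 1)).toNat, by simp; omega⟩ hyr
          · omega
        apply hy
        have hk0 : phiKer ν x y = 0 := by
          rw [phiKer, if_neg (by omega), if_neg (by omega)]
        show phiKer ν x y * phiIter ν m y z = 0
        rw [hk0, zero_mul]
    rw [h1]
    have h2 : ∀ t : ℕ, phiKer ν x (x - 1 + (t : ℤ)) * phiIter ν m (x - 1 + (t : ℤ)) z
        = (2 * (Real.pi : ℂ) * I)⁻¹ * ∮ u in C(Cc ν, R),
            phiKer ν x (x - 1 + (t : ℤ)) * Ig ν ((m : ℤ) + 1) (z - (x - 1 + (t : ℤ)) + m) u := by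
      intro t
      rw [ih (x - 1 + (t : ℤ)) z, circleIntegral.integral_const_mul]
      ring
    rw [tsum_congr h2, tsum_mul_left, h.step_sum m x z]
    have h3 : ((m + 1 : ℕ) : ℤ) + 1 = (m : ℤ) + 2 := by push_cast; ring
    have h4 : z - x + ((m + 1 : ℕ) : ℤ) = z - x + m + 1 := by push_cast; ring
    rw [h3, h4]

end Good

/-- contour integral representation of the `(n₂-n₁)`-fold convolution
`φ^{(n₁,n₂)}(x₁,x₂)`, with contour a circle centered at `1/(1+ν)` of radius `R` that
encloses `0` and `1`, stays outside the circle `|u - 1/(1+ν)| = 1/(1+ν)`, and does not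
enclose `1/ν`. -/
theorem phi_convolution_contour_integral
    (ν : ℝ) (hν : |ν| < 1) (n₁ n₂ x₁ x₂ : ℤ) (hn : n₁ < n₂)
    (R : ℝ) (hR1 : 1 / (1 + ν) < R)
    (hR2 : ν ≠ 0 → R < |1 / ν - 1 / (1 + ν)|) :
    phiIter ν ((n₂ - n₁).toNat - 1) x₁ x₂ =
      (2 * (Real.pi : ℂ) * Complex.I)⁻¹ *
        ∮ u in C((1 / (1 + (ν : ℂ))), R),
          ((ν : ℂ) - 1) * (1 - u) ^ (x₂ - x₁ + n₂ - n₁ - 1) /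
            (u ^ (n₂ - n₁) * (1 - (ν : ℂ) * u) ^ (x₂ - x₁ + n₂ - n₁ + 1)) := by
  have h : Good ν R := ⟨hν, hR1, hR2⟩
  have e1 : ((((n₂ - n₁).toNat - 1 : ℕ)) : ℤ) + 1 = n₂ - n₁ := by omega
  have e2 : x₂ - x₁ + ((((n₂ - n₁).toNat - 1 : ℕ)) : ℤ) = x₂ - x₁ + n₂ - n₁ - 1 := by omega
  have e3 : x₂ - x₁ + n₂ - n₁ - 1 + 2 = x₂ - x₁ + n₂ - n₁ + 1 := by omega
  rw [h.key ((n₂ - n₁).toNat - 1) x₁ x₂]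
  unfold Cc
  congr 1
  refine circleIntegral.integral_congr h.hR0.le fun u hu => ?_
  simp only [Ig, e1, e2, e3]
end

section
/- Along the curve θ = θ(z_c), χ = χ(z_c) defined parametrically by χ = (μ-ν)(1-2z_c+z_c²(μ+ν-2μν)-μν z_c⁴+2μν z_c³)/((1-ν)(1-μ z_c)²(1-ν z_c²)) and θ = (μ-ν)(1-μ)z_c²/((1-μ z_c)²(1-ν z_c²)) for z_c ∈ (0,1), the function χ(θ) is strictly decreasing with derivative dχ/dθ = -1/c(θ) < -1, where c(θ) = (1-ν)z_c/(ν z_c² - 2ν z_c + 1) ∈ (0,1). -/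
/-- Parametric expression `θ(z_c)` for the scaled particle number. -/
noncomputable def thetaP (μ ν : ℝ) (z : ℝ) : ℝ :=
  (μ - ν) * (1 - μ) * z ^ 2 / ((1 - μ * z) ^ 2 * (1 - ν * z ^ 2))

/-- Parametric expression `χ(z_c)` for the scaled position. -/
noncomputable def chiP (μ ν : ℝ) (z : ℝ) : ℝ :=
  (μ - ν) * (1 - 2 * z + z ^ 2 * (μ + ν - 2 * μ * ν) - μ * ν * z ^ 4 + 2 * μ * ν * z ^ 3) /
    ((1 - ν) * (1 - μ * z) ^ 2 * (1 - ν * z ^ 2))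

/-- Parametric expression `c(z_c)` for the particle density. -/
noncomputable def densP (ν : ℝ) (z : ℝ) : ℝ := (1 - ν) * z / (ν * z ^ 2 - 2 * ν * z + 1)

lemma hasDerivAt_thetaP (μ ν z : ℝ) (hD : (1 - μ * z) ^ 2 * (1 - ν * z ^ 2) ≠ 0) :
    HasDerivAt (thetaP μ ν)
      (2 * (μ - ν) * (1 - μ) * z * (1 - μ * z) * (1 - μ * ν * z ^ 3) /
        ((1 - μ * z) ^ 2 * (1 - ν * z ^ 2)) ^ 2) z := by
  have hN : HasDerivAt (fun x : ℝ => (μ - ν) * (1 - μ) * x ^ 2)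
      ((μ - ν) * (1 - μ) * (2 * z)) z := by
    simpa [mul_assoc] using (hasDerivAt_pow 2 z).const_mul ((μ - ν) * (1 - μ))
  have hA : HasDerivAt (fun x : ℝ => 1 - μ * x) (-μ) z := by
    simpa using ((hasDerivAt_id z).const_mul μ).const_sub 1
  have hA2 : HasDerivAt (fun x : ℝ => (1 - μ * x) ^ 2) (2 * (1 - μ * z) * (-μ)) z := by
    simpa [mul_assoc] using hA.fun_pow 2
  have hB : HasDerivAt (fun x : ℝ => 1 - ν * x ^ 2) (-(ν * (2 * z))) z := by
    simpa [mul_assoc] using ((hasDerivAt_pow 2 z).const_mul ν).const_sub 1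
  have hDder : HasDerivAt (fun x : ℝ => (1 - μ * x) ^ 2 * (1 - ν * x ^ 2))
      (2 * (1 - μ * z) * (-μ) * (1 - ν * z ^ 2) + (1 - μ * z) ^ 2 * (-(ν * (2 * z)))) z :=
    hA2.mul hB
  have h := hN.fun_div hDder hD
  have hfun : thetaP μ ν = fun x : ℝ =>
      (μ - ν) * (1 - μ) * x ^ 2 / ((1 - μ * x) ^ 2 * (1 - ν * x ^ 2)) := rfl
  rw [hfun]
  refine h.congr_deriv ?_
  ring

lemma hasDerivAt_chiP (μ ν z : ℝ) (hD : (1 - ν) * (1 - μ * z) ^ 2 * (1 - ν * z ^ 2) ≠ 0) :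
    HasDerivAt (chiP μ ν)
      (-2 * (μ - ν) * (1 - ν) * (1 - μ) * (1 - μ * z) * (1 - μ * ν * z ^ 3) *
          (ν * z ^ 2 - 2 * ν * z + 1) /
        ((1 - ν) * (1 - μ * z) ^ 2 * (1 - ν * z ^ 2)) ^ 2) z := by
  have hP : HasDerivAt (fun x : ℝ =>
      (μ - ν) * (1 - 2 * x + x ^ 2 * (μ + ν - 2 * μ * ν) - μ * ν * x ^ 4 + 2 * μ * ν * x ^ 3))
      ((μ - ν) * (-2 + 2 * z * (μ + ν - 2 * μ * ν) - μ * ν * (4 * z ^ 3) +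
        2 * μ * ν * (3 * z ^ 2))) z := by
    have h1 : HasDerivAt (fun x : ℝ =>
        1 - 2 * x + x ^ 2 * (μ + ν - 2 * μ * ν) - μ * ν * x ^ 4 + 2 * μ * ν * x ^ 3)
        (-2 + 2 * z * (μ + ν - 2 * μ * ν) - μ * ν * (4 * z ^ 3) + 2 * μ * ν * (3 * z ^ 2)) z := by
      have ha : HasDerivAt (fun x : ℝ => 1 - 2 * x) (-2 : ℝ) z := by
        simpa using ((hasDerivAt_id z).const_mul (2 : ℝ)).const_sub 1
      have hb : HasDerivAt (fun x : ℝ => x ^ 2 * (μ + ν - 2 * μ * ν))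
          (2 * z * (μ + ν - 2 * μ * ν)) z := by
        simpa [mul_comm, mul_assoc] using (hasDerivAt_pow 2 z).mul_const (μ + ν - 2 * μ * ν)
      have hc : HasDerivAt (fun x : ℝ => μ * ν * x ^ 4) (μ * ν * (4 * z ^ 3)) z := by
        simpa [mul_assoc] using (hasDerivAt_pow 4 z).const_mul (μ * ν)
      have hd : HasDerivAt (fun x : ℝ => 2 * μ * ν * x ^ 3) (2 * μ * ν * (3 * z ^ 2)) z := by
        simpa [mul_assoc] using (hasDerivAt_pow 3 z).const_mul (2 * μ * ν)
      exact ((ha.add hb).sub hc).add hd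
    simpa [mul_assoc] using h1.const_mul (μ - ν)
  have hA : HasDerivAt (fun x : ℝ => 1 - μ * x) (-μ) z := by
    simpa using ((hasDerivAt_id z).const_mul μ).const_sub 1
  have hA2 : HasDerivAt (fun x : ℝ => (1 - μ * x) ^ 2) (2 * (1 - μ * z) * (-μ)) z := by
    simpa [mul_assoc] using hA.fun_pow 2
  have hA3 : HasDerivAt (fun x : ℝ => (1 - ν) * (1 - μ * x) ^ 2)
      ((1 - ν) * (2 * (1 - μ * z) * (-μ))) z := by
    simpa [mul_assoc] using hA2.const_mul (1 - ν)
  have hB : HasDerivAt (fun x : ℝ => 1 - ν * x ^ 2) (-(ν * (2 * z))) z := by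
    simpa [mul_assoc] using ((hasDerivAt_pow 2 z).const_mul ν).const_sub 1
  have hDder : HasDerivAt (fun x : ℝ => (1 - ν) * (1 - μ * x) ^ 2 * (1 - ν * x ^ 2))
      ((1 - ν) * (2 * (1 - μ * z) * (-μ)) * (1 - ν * z ^ 2) +
        (1 - ν) * (1 - μ * z) ^ 2 * (-(ν * (2 * z)))) z := hA3.mul hB
  have h := hP.fun_div hDder hD
  have hfun : chiP μ ν = fun x : ℝ =>
      (μ - ν) * (1 - 2 * x + x ^ 2 * (μ + ν - 2 * μ * ν) - μ * ν * x ^ 4 + 2 * μ * ν * x ^ 3) /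
        ((1 - ν) * (1 - μ * x) ^ 2 * (1 - ν * x ^ 2)) := rfl
  rw [hfun]
  refine h.congr_deriv ?_
  ring

/-- along the parametric curve `(θ(z_c), χ(z_c))`, `z_c ∈ (0,1)`, the
function `χ(θ)` is strictly decreasing with derivative `dχ/dθ = -1/c(θ) < -1`, where
`c(θ) = densP ν z_c ∈ (0,1)`. -/
theorem chi_of_theta_strictly_decreasing
    (p μ ν : ℝ) (hp : 0 < p) (hp1 : p < 1) (hμ : 0 ≤ μ) (hμ1 : μ < 1)
    (hν : ν = (μ - p) / (1 - p)) :
    (∀ z ∈ Set.Ioo (0 : ℝ) 1,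
        densP ν z ∈ Set.Ioo (0 : ℝ) 1 ∧
        deriv (thetaP μ ν) z ≠ 0 ∧
        deriv (chiP μ ν) z / deriv (thetaP μ ν) z = -1 / densP ν z ∧
        -1 / densP ν z < -1) ∧
    ∀ z₁ ∈ Set.Ioo (0 : ℝ) 1, ∀ z₂ ∈ Set.Ioo (0 : ℝ) 1,
      thetaP μ ν z₁ < thetaP μ ν z₂ → chiP μ ν z₂ < chiP μ ν z₁ := by
  have hp' : (0:ℝ) < 1 - p := by linarith
  have hμν : 0 < μ - ν := by
    rw [hν, sub_pos, div_lt_iff₀ hp']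
    nlinarith
  have h1ν : (0:ℝ) < 1 - ν := by
    rw [hν, sub_pos, div_lt_one hp']
    linarith
  -- basic positivity facts for z ∈ (0,1)
  have facts : ∀ z ∈ Set.Ioo (0 : ℝ) 1,
      0 < 1 - μ * z ∧ 0 < 1 - ν * z ^ 2 ∧ 0 < 1 - μ * ν * z ^ 3 ∧
      0 < ν * z ^ 2 - 2 * ν * z + 1 := by
    rintro z ⟨hz0, hz1⟩
    have hd1 : 0 < 1 - μ * z := by nlinarith
    have hd2 : 0 < 1 - ν * z ^ 2 := by nlinarith [mul_pos (mul_pos hz0 hz0) h1ν]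
    have hw : 0 < 1 - μ * ν * z ^ 3 := by
      nlinarith [mul_nonneg (mul_nonneg hμ hz0.le) hd2.le]
    have hR : 0 < ν * z ^ 2 - 2 * ν * z + 1 := by
      nlinarith [mul_pos (mul_pos hz0 (show (0:ℝ) < 2 - z by linarith)) h1ν, sq_nonneg (1 - z)]
    exact ⟨hd1, hd2, hw, hR⟩
  have hdens : ∀ z ∈ Set.Ioo (0 : ℝ) 1, densP ν z ∈ Set.Ioo (0 : ℝ) 1 := by
    rintro z hz
    obtain ⟨hd1, hd2, hw, hR⟩ := facts z hz
    obtain ⟨hz0, hz1⟩ := hz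
    constructor
    · exact div_pos (mul_pos h1ν hz0) hR
    · rw [densP, div_lt_one hR]
      have hνz : 0 < 1 - ν * z := by nlinarith [mul_pos hz0 h1ν]
      nlinarith [mul_pos (show (0:ℝ) < 1 - z by linarith) hνz]
  -- derivative values
  have hderθ : ∀ z ∈ Set.Ioo (0 : ℝ) 1,
      deriv (thetaP μ ν) z = 2 * (μ - ν) * (1 - μ) * z * (1 - μ * z) * (1 - μ * ν * z ^ 3) /
        ((1 - μ * z) ^ 2 * (1 - ν * z ^ 2)) ^ 2 := by
    rintro z hz
    obtain ⟨hd1, hd2, hw, hR⟩ := facts z hz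
    exact (hasDerivAt_thetaP μ ν z (by positivity)).deriv
  have hderχ : ∀ z ∈ Set.Ioo (0 : ℝ) 1,
      deriv (chiP μ ν) z = -2 * (μ - ν) * (1 - ν) * (1 - μ) * (1 - μ * z) * (1 - μ * ν * z ^ 3) *
          (ν * z ^ 2 - 2 * ν * z + 1) /
        ((1 - ν) * (1 - μ * z) ^ 2 * (1 - ν * z ^ 2)) ^ 2 := by
    rintro z hz
    obtain ⟨hd1, hd2, hw, hR⟩ := facts z hz
    exact (hasDerivAt_chiP μ ν z (by positivity)).deriv
  have hθpos : ∀ z ∈ Set.Ioo (0 : ℝ) 1, 0 < deriv (thetaP μ ν) z := by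
    rintro z hz
    obtain ⟨hd1, hd2, hw, hR⟩ := facts z hz
    rw [hderθ z hz]
    have h1μ : (0:ℝ) < 1 - μ := by linarith
    have := hz.1
    positivity
  have hχneg : ∀ z ∈ Set.Ioo (0 : ℝ) 1, deriv (chiP μ ν) z < 0 := by
    rintro z hz
    obtain ⟨hd1, hd2, hw, hR⟩ := facts z hz
    rw [hderχ z hz]
    have h1μ : (0:ℝ) < 1 - μ := by linarith
    apply div_neg_of_neg_of_pos
    · have : 0 < 2 * (μ - ν) * (1 - ν) * (1 - μ) * (1 - μ * z) * (1 - μ * ν * z ^ 3) *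
          (ν * z ^ 2 - 2 * ν * z + 1) := by positivity
      nlinarith
    · positivity
  refine ⟨?_, ?_⟩
  · rintro z hz
    obtain ⟨hd1, hd2, hw, hR⟩ := facts z hz
    obtain ⟨hdens0, hdens1⟩ := hdens z hz
    have hz0 := hz.1
    have h1μ : (0:ℝ) < 1 - μ := by linarith
    refine ⟨⟨hdens0, hdens1⟩, (hθpos z hz).ne', ?_, ?_⟩
    · rw [hderθ z hz, hderχ z hz, densP]
      have hT : (0:ℝ) < 2 * (μ - ν) * (1 - μ) * z * (1 - μ * z) * (1 - μ * ν * z ^ 3) := by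
        positivity
      field_simp [hd1.ne', hd2.ne', h1ν.ne', hR.ne', hz0.ne', hT.ne', sub_ne_zero.mpr hμ1.ne]
    · have h : 1 < 1 / densP ν z := by
        rw [lt_div_iff₀ hdens0]; linarith
      have : (-1 : ℝ) / densP ν z = -(1 / densP ν z) := by ring
      rw [this]; linarith
  · -- monotonicity
    have hmono : StrictMonoOn (thetaP μ ν) (Set.Ioo (0:ℝ) 1) := by
      apply strictMonoOn_of_deriv_pos (convex_Ioo 0 1)
      · intro x hx
        obtain ⟨hd1, hd2, hw, hR⟩ := facts x hx
        exact (hasDerivAt_thetaP μ ν x (by positivity)).continuousAt.continuousWithinAt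
      · intro x hx
        rw [interior_Ioo] at hx
        exact hθpos x hx
    have hanti : StrictAntiOn (chiP μ ν) (Set.Ioo (0:ℝ) 1) := by
      apply strictAntiOn_of_deriv_neg (convex_Ioo 0 1)
      · intro x hx
        obtain ⟨hd1, hd2, hw, hR⟩ := facts x hx
        exact (hasDerivAt_chiP μ ν x (by positivity)).continuousAt.continuousWithinAt
      · intro x hx
        rw [interior_Ioo] at hx
        exact hχneg x hx
    intro z₁ hz₁ z₂ hz₂ hθ
    have h12 : z₁ < z₂ := by
      by_contra h
      push_neg at h
      have := (hmono.le_iff_le hz₂ hz₁).mpr h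
      linarith
    exact hanti hz₁ hz₂ h12
end

section
/- For f(χ,θ,u) = (θ+χ) ln(1-u) - θ ln u - (θ+χ-1) ln(1-νu) - ln(1-μu), evaluated at the double saddle point (χ,θ) = (χ(z_c),θ(z_c)), the third derivative in u equals f^{(0,0,3)}(χ(θ),θ,z_c) = -2(1-μ)(μ-ν)(1-μν z_c³)/((1-z_c) z_c (1-μ z_c)³ (1-ν z_c)(1-ν z_c²)) and in particular is strictly negative for z_c ∈ (0,1), ν < μ < 1, 0 ≤ μν < 1. -/
lemma L1 (A T B M N u : ℝ) (h1 : 1 - u ≠ 0) (h2 : u ≠ 0) (h3 : 1 - N*u ≠ 0)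
    (h4 : 1 - M*u ≠ 0) :
    HasDerivAt (fun u : ℝ =>
        A * Real.log (1 - u) - T * Real.log u - B * Real.log (1 - N*u) - Real.log (1 - M*u))
      (-A/(1-u) - T/u + B*N/(1-N*u) + M/(1-M*u)) u := by
  have d1 : HasDerivAt (fun u : ℝ => 1 - u) (-1) u := (hasDerivAt_id u).const_sub 1
  have dN : HasDerivAt (fun u : ℝ => 1 - N*u) (-N) u :=
    by simpa using ((hasDerivAt_id u).const_mul N).const_sub 1
  have dM : HasDerivAt (fun u : ℝ => 1 - M*u) (-M) u :=
    by simpa using ((hasDerivAt_id u).const_mul M).const_sub 1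
  have l1 := ((Real.hasDerivAt_log h1).comp u d1).const_mul A
  have l2 := (Real.hasDerivAt_log h2).const_mul T
  have l3 := ((Real.hasDerivAt_log h3).comp u dN).const_mul B
  have l4 := (Real.hasDerivAt_log h4).comp u dM
  have := ((l1.sub l2).sub l3).sub l4
  refine this.congr_deriv ?_
  field_simp
  ring

lemma L2 (A T B M N u : ℝ) (h1 : 1 - u ≠ 0) (h2 : u ≠ 0) (h3 : 1 - N*u ≠ 0)
    (h4 : 1 - M*u ≠ 0) :
    HasDerivAt (fun u : ℝ => -A/(1-u) - T/u + B*N/(1-N*u) + M/(1-M*u))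
      (-A/(1-u)^2 + T/u^2 + B*N^2/(1-N*u)^2 + M^2/(1-M*u)^2) u := by
  have d1 : HasDerivAt (fun u : ℝ => 1 - u) (-1) u := (hasDerivAt_id u).const_sub 1
  have dN : HasDerivAt (fun u : ℝ => 1 - N*u) (-N) u :=
    by simpa using ((hasDerivAt_id u).const_mul N).const_sub 1
  have dM : HasDerivAt (fun u : ℝ => 1 - M*u) (-M) u :=
    by simpa using ((hasDerivAt_id u).const_mul M).const_sub 1
  have l1 := (hasDerivAt_const u (-A)).div d1 h1
  have l2 := (hasDerivAt_const u T).div (hasDerivAt_id u) h2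
  have l3 := (hasDerivAt_const u (B*N)).div dN h3
  have l4 := (hasDerivAt_const u M).div dM h4
  have := ((l1.sub l2).add l3).add l4
  refine this.congr_deriv ?_
  simp only [id_eq, Pi.pow_apply]
  field_simp
  ring

lemma L3 (A T B M N u : ℝ) (h1 : 1 - u ≠ 0) (h2 : u ≠ 0) (h3 : 1 - N*u ≠ 0)
    (h4 : 1 - M*u ≠ 0) :
    HasDerivAt (fun u : ℝ => -A/(1-u)^2 + T/u^2 + B*N^2/(1-N*u)^2 + M^2/(1-M*u)^2)
      (-2*A/(1-u)^3 - 2*T/u^3 + 2*B*N^3/(1-N*u)^3 + 2*M^3/(1-M*u)^3) u := by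
  have d1 : HasDerivAt (fun u : ℝ => 1 - u) (-1) u := (hasDerivAt_id u).const_sub 1
  have dN : HasDerivAt (fun u : ℝ => 1 - N*u) (-N) u :=
    by simpa using ((hasDerivAt_id u).const_mul N).const_sub 1
  have dM : HasDerivAt (fun u : ℝ => 1 - M*u) (-M) u :=
    by simpa using ((hasDerivAt_id u).const_mul M).const_sub 1
  have l1 := (hasDerivAt_const u (-A)).div (d1.pow 2) (pow_ne_zero 2 h1)
  have l2 := (hasDerivAt_const u T).div ((hasDerivAt_id u).pow 2) (pow_ne_zero 2 h2)
  have l3 := (hasDerivAt_const u (B*N^2)).div (dN.pow 2) (pow_ne_zero 2 h3)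
  have l4 := (hasDerivAt_const u (M^2)).div (dM.pow 2) (pow_ne_zero 2 h4)
  have := ((l1.add l2).add l3).add l4
  refine this.congr_deriv ?_
  simp only [id_eq, Pi.pow_apply, Nat.cast_ofNat, show (2:ℕ) - 1 = 1 from rfl, pow_one]
  field_simp
  ring

set_option maxHeartbeats 1000000 in
/-- the third `u`-derivative of
`f(χ,θ,u) = (θ+χ)ln(1-u) - θ ln u - (θ+χ-1)ln(1-νu) - ln(1-μu)` at the double saddle
point `u = z_c`, with `(χ,θ) = (χ(z_c),θ(z_c))`, equals the stated rational expression
and is strictly negative. -/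
theorem third_derivative_at_double_saddle
    (μ ν z : ℝ) (hz0 : 0 < z) (hz1 : z < 1)
    (h1 : ν < μ) (h2 : μ < 1) (h3 : 0 ≤ μ * ν) (h4 : μ * ν < 1) :
    iteratedDeriv 3
        (fun u : ℝ =>
          (thetaP μ ν z + chiP μ ν z) * Real.log (1 - u) - thetaP μ ν z * Real.log u -
            (thetaP μ ν z + chiP μ ν z - 1) * Real.log (1 - ν * u) -
            Real.log (1 - μ * u)) z =
      -2 * (1 - μ) * (μ - ν) * (1 - μ * ν * z ^ 3) /
        ((1 - z) * z * (1 - μ * z) ^ 3 * (1 - ν * z) * (1 - ν * z ^ 2)) ∧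
    -2 * (1 - μ) * (μ - ν) * (1 - μ * ν * z ^ 3) /
        ((1 - z) * z * (1 - μ * z) ^ 3 * (1 - ν * z) * (1 - ν * z ^ 2)) < 0 := by
  have hμ1 : (0:ℝ) < 1 - μ := by linarith
  have hν1 : (0:ℝ) < 1 - ν := by linarith
  have hz1' : (0:ℝ) < 1 - z := by linarith
  have hμz : (0:ℝ) < 1 - μ * z := by nlinarith
  have hνz : (0:ℝ) < 1 - ν * z := by nlinarith
  have hνz2 : (0:ℝ) < 1 - ν * z ^ 2 := by nlinarith
  have hz3 : z ^ 3 < 1 := pow_lt_one₀ (le_of_lt hz0) hz1 (by norm_num)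
  have hnum : (0:ℝ) < 1 - μ * ν * z ^ 3 := by
    nlinarith [mul_le_mul_of_nonneg_left hz3.le h3]
  have hA' : thetaP μ ν z + chiP μ ν z
      = (μ-ν)*(1-z)^2*(1-μ*ν*z^2)/((1-ν)*(1-μ*z)^2*(1-ν*z^2)) := by
    unfold thetaP chiP; field_simp; ring
  have hB' : thetaP μ ν z + chiP μ ν z - 1
      = -((1-μ)*(1-ν*z)^2*(1-μ*z^2))/((1-ν)*(1-μ*z)^2*(1-ν*z^2)) := by
    unfold thetaP chiP; field_simp; ring
  have hT' : thetaP μ ν z = (μ - ν) * (1 - μ) * z ^ 2 / ((1 - μ * z) ^ 2 * (1 - ν * z ^ 2)) := rfl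
  -- eventually conditions
  have t1 : ∀ᶠ u in nhds z, 1 - u ≠ 0 :=
    ((continuous_const.sub continuous_id).continuousAt (x := z)).eventually_ne
      (by simpa using hz1'.ne')
  have t2 : ∀ᶠ u in nhds z, u ≠ 0 := eventually_ne_nhds hz0.ne'
  have t3 : ∀ᶠ u in nhds z, 1 - ν * u ≠ 0 :=
    ((continuous_const.sub (continuous_const.mul continuous_id)).continuousAt (x := z)).eventually_ne
      (by simpa using hνz.ne')
  have t4 : ∀ᶠ u in nhds z, 1 - μ * u ≠ 0 :=
    ((continuous_const.sub (continuous_const.mul continuous_id)).continuousAt (x := z)).eventually_ne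
      (by simpa using hμz.ne')
  have e1 : deriv (fun u : ℝ =>
        (thetaP μ ν z + chiP μ ν z) * Real.log (1 - u) - thetaP μ ν z * Real.log u - (thetaP μ ν z + chiP μ ν z - 1) * Real.log (1 - ν * u) - Real.log (1 - μ * u))
      =ᶠ[nhds z] fun u => -(thetaP μ ν z + chiP μ ν z)/(1-u) - thetaP μ ν z/u + (thetaP μ ν z + chiP μ ν z - 1)*ν/(1-ν*u) + μ/(1-μ*u) := by
    filter_upwards [t1, t2, t3, t4] with u h1' h2' h3' h4'
    exact (L1 (thetaP μ ν z + chiP μ ν z) (thetaP μ ν z) (thetaP μ ν z + chiP μ ν z - 1) μ ν u h1' h2' h3' h4').deriv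
  have e2 : deriv (fun u : ℝ => -(thetaP μ ν z + chiP μ ν z)/(1-u) - thetaP μ ν z/u + (thetaP μ ν z + chiP μ ν z - 1)*ν/(1-ν*u) + μ/(1-μ*u))
      =ᶠ[nhds z] fun u => -(thetaP μ ν z + chiP μ ν z)/(1-u)^2 + thetaP μ ν z/u^2 + (thetaP μ ν z + chiP μ ν z - 1)*ν^2/(1-ν*u)^2 + μ^2/(1-μ*u)^2 := by
    filter_upwards [t1, t2, t3, t4] with u h1' h2' h3' h4'
    exact (L2 (thetaP μ ν z + chiP μ ν z) (thetaP μ ν z) (thetaP μ ν z + chiP μ ν z - 1) μ ν u h1' h2' h3' h4').deriv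
  have key : iteratedDeriv 3
      (fun u : ℝ =>
        (thetaP μ ν z + chiP μ ν z) * Real.log (1 - u) - thetaP μ ν z * Real.log u - (thetaP μ ν z + chiP μ ν z - 1) * Real.log (1 - ν * u) - Real.log (1 - μ * u)) z
      = -2*(thetaP μ ν z + chiP μ ν z)/(1-z)^3 - 2*thetaP μ ν z/z^3 + 2*(thetaP μ ν z + chiP μ ν z - 1)*ν^3/(1-ν*z)^3 + 2*μ^3/(1-μ*z)^3 := by
    rw [show (3:ℕ) = 2 + 1 from rfl, iteratedDeriv_succ,
      show (2:ℕ) = 1 + 1 from rfl, iteratedDeriv_succ, iteratedDeriv_one]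
    have e3 := (e1.deriv.trans e2).deriv
    rw [e3.eq_of_nhds]
    exact (L3 (thetaP μ ν z + chiP μ ν z) (thetaP μ ν z) (thetaP μ ν z + chiP μ ν z - 1) μ ν z hz1'.ne' hz0.ne' hνz.ne' hμz.ne').deriv
  constructor
  · rw [key]
    have h5 : -2*(thetaP μ ν z + chiP μ ν z)/(1-z)^3
        = -2*((μ-ν)*(1-μ*ν*z^2))/((1-ν)*(1-μ*z)^2*(1-ν*z^2)*(1-z)) := by
      rw [hA']; field_simp
    have h6 : 2*(thetaP μ ν z + chiP μ ν z - 1)*ν^3/(1-ν*z)^3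
        = -(2*((1-μ)*ν^3*(1-μ*z^2)))/((1-ν)*(1-μ*z)^2*(1-ν*z^2)*(1-ν*z)) := by
      rw [hB']; field_simp
    have h7 : 2*thetaP μ ν z/z^3
        = 2*((μ-ν)*(1-μ))/((1-μ*z)^2*(1-ν*z^2)*z) := by
      rw [hT']; field_simp
    rw [h5, h6, h7]
    field_simp
    ring
  · apply div_neg_of_neg_of_pos
    · nlinarith [mul_pos (mul_pos hμ1 (show (0:ℝ) < μ - ν by linarith)) hnum]
    · positivity
end

section
/- Let K be an n × n matrix of the form K = K̃ - φ where φ is strictly upper triangular. Then det K = ∑_{k=0}^{n-1} ∑_{I_k, J_k} det K̃_{Ī_k, J̄_k} · ∏_{l=1}^{k} φ_{i_l, j_l}, where the inner sum is over pairs of k-element subsets I_k = {i_1 < ⋯ < i_k} and injective tuples J_k = (j_1, …, j_k) of distinct indices from {1,…,n} with i_l < j_l for all l, and K̃_{Ī_k, J̄_k} denotes the submatrix of K̃ obtained by deleting the rows in I_k and the columns in J_k (up to the appropriate sign of the permutation matching deleted rows with columns). -/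
open Finset

/-- minor expansion of `det(K̃ - φ)` for `φ` strictly upper triangular.
For each set `J` of columns and each choice `g` assigning to every column `j ∈ J` a row
`g j < j` (entry `φ_{g j, j}`), the complementary minor of `K̃` (with its matching sign)
is encoded as the determinant of the matrix whose `J`-columns are replaced by the
corresponding unit vectors `e_{g j}`. -/
theorem det_minor_expansion_strictly_upper
    (n : ℕ) (Kt φm : Matrix (Fin n) (Fin n) ℝ)
    (hφ : ∀ i j : Fin n, ¬ i < j → φm i j = 0) :
    Matrix.det (Kt - φm) =
      ∑ J : Finset (Fin n), ∑ g : Fin n → Fin n,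
        if (∀ j ∈ J, g j < j) ∧ (∀ j ∉ J, g j = j) then
          (∏ j ∈ J, -φm (g j) j) *
            Matrix.det (Matrix.of fun i j : Fin n =>
              if j ∈ J then (if i = g j then (1 : ℝ) else 0) else Kt i j)
        else 0 := by
  classical
  set v : Fin n → Option (Fin n) → (Fin n → ℝ) := fun j o =>
    Option.elim o (fun i => Kt i j) (fun i0 i => if i = i0 then -φm i0 j else 0) with hv
  set F : (Fin n → Option (Fin n)) → ℝ := fun r =>
    Matrix.det (Matrix.of fun i j => v j (r j) i) with hF
  -- Step 1: multilinear expansion of det over columns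
  have key : Matrix.det (Kt - φm) = ∑ r : Fin n → Option (Fin n), F r := by
    rw [← Matrix.det_transpose]
    have h1 : (Kt - φm).transpose = fun j => ∑ o : Option (Fin n), v j o := by
      funext j i
      simp only [Matrix.transpose_apply, Matrix.sub_apply, Finset.sum_apply,
        Fintype.sum_option, hv, Option.elim]
      rw [Finset.sum_ite_eq Finset.univ i (fun i0 => -φm i0 j)]
      simp [sub_eq_add_neg]
    have h2 : ∀ M : Matrix (Fin n) (Fin n) ℝ, M.det = Matrix.detRowAlternating M :=
      fun _ => rfl
    rw [h2, h1]
    rw [show (Matrix.detRowAlternating (fun j => ∑ o : Option (Fin n), v j o) : ℝ)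
        = Matrix.detRowAlternating.toMultilinearMap (fun j => ∑ o : Option (Fin n), v j o)
        from rfl]
    rw [MultilinearMap.map_sum]
    refine Finset.sum_congr rfl fun r _ => ?_
    have : Matrix.detRowAlternating.toMultilinearMap (fun j => v j (r j))
        = Matrix.det (Matrix.of fun j i => v j (r j) i) := rfl
    rw [this, ← Matrix.det_transpose]
    rfl
  rw [key]
  -- Step 2: terms with an invalid choice vanish
  have hF0 : ∀ r : Fin n → Option (Fin n),
      ¬ (∀ j : Fin n, ∀ i0 : Fin n, r j = some i0 → i0 < j) → F r = 0 := by
    intro r hr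
    push_neg at hr
    obtain ⟨j, i0, hj, hlt⟩ := hr
    apply Matrix.det_eq_zero_of_column_eq_zero j
    intro i
    simp [hv, hj, hφ i0 j (not_lt.mpr hlt), Matrix.of_apply]
  have hQ : (∑ r : Fin n → Option (Fin n), F r)
      = ∑ r ∈ Finset.univ.filter
          (fun r : Fin n → Option (Fin n) => ∀ j i0, r j = some i0 → i0 < j), F r := by
    refine (Finset.sum_subset (Finset.filter_subset _ _) fun r _ hr => ?_).symm
    exact hF0 r (by simpa using hr)
  rw [hQ]
  -- Step 3: rewrite RHS as a sum over a filtered product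
  have e1 : (∑ p ∈ Finset.univ.filter
        (fun p : Finset (Fin n) × (Fin n → Fin n) =>
          (∀ j ∈ p.1, p.2 j < j) ∧ (∀ j ∉ p.1, p.2 j = j)),
        (∏ j ∈ p.1, -φm (p.2 j) j) *
          Matrix.det (Matrix.of fun i j : Fin n =>
            if j ∈ p.1 then (if i = p.2 j then (1 : ℝ) else 0) else Kt i j))
      = ∑ J : Finset (Fin n), ∑ g : Fin n → Fin n,
        if (∀ j ∈ J, g j < j) ∧ (∀ j ∉ J, g j = j) then
          (∏ j ∈ J, -φm (g j) j) *
            Matrix.det (Matrix.of fun i j : Fin n =>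
              if j ∈ J then (if i = g j then (1 : ℝ) else 0) else Kt i j)
        else 0 := by
    rw [Finset.sum_filter, Fintype.sum_prod_type]
  rw [← e1]
  -- Step 4: the bijection
  refine Finset.sum_nbij'
    (fun r => (Finset.univ.filter (fun j => (r j).isSome), fun j => (r j).getD j))
    (fun p j => if j ∈ p.1 then some (p.2 j) else none)
    ?_ ?_ ?_ ?_ ?_
  · intro r hr
    simp only [Finset.mem_filter, Finset.mem_univ, true_and] at hr ⊢
    constructor
    · intro j hj
      have hj' : (r j).isSome := by simpa using hj
      obtain ⟨i0, hi0⟩ := Option.isSome_iff_exists.mp hj'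
      have : (r j).getD j = i0 := by rw [hi0]; rfl
      rw [this]
      exact hr j i0 hi0
    · intro j hj
      have hj' : r j = none := by
        rw [← Option.not_isSome_iff_eq_none]; simpa using hj
      rw [hj']; rfl
  · intro p hp
    simp only [Finset.mem_filter, Finset.mem_univ, true_and] at hp ⊢
    intro j i0 h
    by_cases hj : j ∈ p.1
    · rw [if_pos hj] at h
      exact (Option.some_inj.mp h) ▸ hp.1 j hj
    · rw [if_neg hj] at h; exact absurd h (by simp)
  · intro r hr
    funext j
    dsimp only
    by_cases hj : (r j).isSome
    · rw [if_pos (by simpa using hj)]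
      obtain ⟨i0, hi0⟩ := Option.isSome_iff_exists.mp hj
      rw [hi0]; rfl
    · rw [if_neg (by simpa using hj)]
      rw [Option.not_isSome_iff_eq_none] at hj
      exact hj.symm
  · intro p hp
    simp only [Finset.mem_filter, Finset.mem_univ, true_and] at hp
    have hJ : Finset.univ.filter
        (fun j => (if j ∈ p.1 then some (p.2 j) else none).isSome) = p.1 := by
      ext j
      simp only [Finset.mem_filter, Finset.mem_univ, true_and]
      by_cases hj : j ∈ p.1 <;> simp [hj]
    have hg : (fun j => (if j ∈ p.1 then some (p.2 j) else none).getD j) = p.2 := by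
      funext j
      by_cases hj : j ∈ p.1
      · simp [hj]
      · simp only [if_neg hj, Option.getD_none]
        exact (hp.2 j hj).symm
    exact Prod.ext hJ hg
  · intro r hr
    simp only [Finset.mem_filter, Finset.mem_univ, true_and] at hr
    dsimp only
    set J : Finset (Fin n) := Finset.univ.filter (fun j => (r j).isSome) with hJ
    set g : Fin n → Fin n := fun j => (r j).getD j with hg
    have hM : (Matrix.of fun i j => v j (r j) i)
        = (Matrix.of fun i j : Fin n =>
            if j ∈ J then (if i = g j then (1 : ℝ) else 0) else Kt i j)
          * Matrix.diagonal (fun j => if j ∈ J then -φm (g j) j else 1) := by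
      ext i j
      rw [Matrix.mul_diagonal]
      by_cases hj : j ∈ J
      · obtain ⟨i0, hi0⟩ := Option.isSome_iff_exists.mp
          (by simpa [hJ] using hj)
        have hgj : g j = i0 := by simp [hg, hi0]
        by_cases hi : i = i0 <;>
          simp [hv, hi0, hj, hgj, hi, Matrix.of_apply]
      · have : r j = none := by
          rw [← Option.not_isSome_iff_eq_none]
          simpa [hJ] using hj
        simp [hv, this, hj, Matrix.of_apply]
    show Matrix.det (Matrix.of fun i j => v j (r j) i) = _
    rw [hM, Matrix.det_mul, Matrix.det_diagonal, Finset.prod_ite_mem,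
      Finset.univ_inter, mul_comm]
end
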